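/- Each of the contribution functions ctrb^r, ctrb^{ri}, ctrb^s, and ctrb^g satisfies the directionality principle with respect to each of the QE, DFQuAD, SD-DFQuAD, EB, and EBT semantics: for every acyclic QBAG G and arguments a, x ∈ A, if there is no directed path from x to a in the directed graph (A, Att ∪ Supp), then the contribution of x to a is 0. -/

import Mathlib

open Finset

/-- A quantitative bipolar argumentation graph (QBAG): a finite set of arguments,
an initial strength function, and attack and support relations. -/
structure QBAG where
  args : Finset ℕ
  tau : ℕ → ℝ
  att : Finset (ℕ × ℕ)
  supp : Finset (ℕ × ℕ)

namespace QBAG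

/-- The edge relation of the underlying directed graph (attack or support). -/
def edge (G : QBAG) (x y : ℕ) : Prop := (x, y) ∈ G.att ∨ (x, y) ∈ G.supp

/-- Well-formedness: edges live on the arguments, attack and support are disjoint,
and initial strengths lie in [0,1]. -/
def WF (G : QBAG) : Prop :=
  (∀ p ∈ G.att, p.1 ∈ G.args ∧ p.2 ∈ G.args) ∧
  (∀ p ∈ G.supp, p.1 ∈ G.args ∧ p.2 ∈ G.args) ∧
  Disjoint G.att G.supp ∧
  (∀ a ∈ G.args, G.tau a ∈ Set.Icc (0 : ℝ) 1)

/-- Acyclicity of the directed graph (A, Att ∪ Supp). -/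
def Acyclic (G : QBAG) : Prop := ∀ x, ¬ Relation.TransGen G.edge x x

/-- Direct attackers of an argument. -/
def attackers (G : QBAG) (a : ℕ) : Finset ℕ :=
  (G.att.filter (fun p => p.2 = a)).image Prod.fst

/-- Direct supporters of an argument. -/
def supporters (G : QBAG) (a : ℕ) : Finset ℕ :=
  (G.supp.filter (fun p => p.2 = a)).image Prod.fst

/-- Restriction G↓S of a QBAG to a subset S of the arguments. -/
def restrict (G : QBAG) (S : Finset ℕ) : QBAG where
  args := G.args ∩ S
  tau := G.tau
  att := G.att.filter (fun p => p.1 ∈ S ∧ p.2 ∈ S)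
  supp := G.supp.filter (fun p => p.1 ∈ S ∧ p.2 ∈ S)

/-- G⁻: the QBAG G with every attack and support edge pointing into x removed. -/
def dropInto (G : QBAG) (x : ℕ) : QBAG where
  args := G.args
  tau := G.tau
  att := G.att.filter (fun p => p.2 ≠ x)
  supp := G.supp.filter (fun p => p.2 ≠ x)

/-- G[x←ε]: the QBAG G with the initial strength of x replaced by ε. -/
def setTau (G : QBAG) (x : ℕ) (ε : ℝ) : QBAG where
  args := G.args
  tau := Function.update G.tau x ε
  att := G.att
  supp := G.supp

end QBAG

noncomputable section

/-- Sum aggregation. -/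
def sumAgg (G : QBAG) (s : ℕ → ℝ) (a : ℕ) : ℝ :=
  (∑ y ∈ G.supporters a, s y) - (∑ y ∈ G.attackers a, s y)

/-- Product aggregation. -/
def prodAgg (G : QBAG) (s : ℕ → ℝ) (a : ℕ) : ℝ :=
  (∏ y ∈ G.attackers a, (1 - s y)) - (∏ y ∈ G.supporters a, (1 - s y))

/-- Top aggregation. -/
def topAgg (G : QBAG) (s : ℕ → ℝ) (a : ℕ) : ℝ :=
  (G.supporters a).fold max 0 s - (G.attackers a).fold max 0 s

/-- h for the 2-Max(1) influence function. -/
def h2 (x : ℝ) : ℝ := max 0 x ^ 2 / (1 + max 0 x ^ 2)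

/-- h for the 1-Max(1) influence function. -/
def h1 (x : ℝ) : ℝ := max 0 x / (1 + max 0 x)

/-- 2-Max(1) influence function (used by QE). -/
def iotaQE (w s : ℝ) : ℝ := w - w * h2 (-s) + (1 - w) * h2 s

/-- Linear(1) influence function (used by DFQuAD). -/
def iotaLin (w s : ℝ) : ℝ := w - w * max 0 (-s) + (1 - w) * max 0 s

/-- 1-Max(1) influence function (used by SD-DFQuAD). -/
def iotaSD (w s : ℝ) : ℝ := w - w * h1 (-s) + (1 - w) * h1 s

/-- Euler-based influence function (used by EB and EBT). -/
def iotaEB (w s : ℝ) : ℝ := 1 - (1 - w ^ 2) / (1 + w * Real.exp s)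

/-- σ is a modular semantics with aggregation `agg` and influence `iota`:
on every well-formed acyclic QBAG the final strengths satisfy the defining equations. -/
def IsSemantics (agg : QBAG → (ℕ → ℝ) → ℕ → ℝ) (iota : ℝ → ℝ → ℝ)
    (σ : QBAG → ℕ → ℝ) : Prop :=
  ∀ G : QBAG, G.WF → G.Acyclic → ∀ a ∈ G.args, σ G a = iota (G.tau a) (agg G (σ G) a)

/-- QE semantics. -/
def IsQE (σ : QBAG → ℕ → ℝ) : Prop := IsSemantics sumAgg iotaQE σ

/-- DFQuAD semantics. -/
def IsDF (σ : QBAG → ℕ → ℝ) : Prop := IsSemantics prodAgg iotaLin σ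

/-- SD-DFQuAD semantics. -/
def IsSD (σ : QBAG → ℕ → ℝ) : Prop := IsSemantics prodAgg iotaSD σ

/-- EB semantics. -/
def IsEB (σ : QBAG → ℕ → ℝ) : Prop := IsSemantics sumAgg iotaEB σ

/-- EBT semantics. -/
def IsEBT (σ : QBAG → ℕ → ℝ) : Prop := IsSemantics topAgg iotaEB σ

/-- A gradual semantics assigns final strengths in [0,1] on acyclic QBAGs. -/
def IsGradualSemantics (σ : QBAG → ℕ → ℝ) : Prop :=
  ∀ G : QBAG, G.WF → G.Acyclic → ∀ a ∈ G.args, σ G a ∈ Set.Icc (0 : ℝ) 1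

/-- Removal-based contribution: ctrb^r_{G,a}(x) = σ_G(a) − σ_{G↓(A∖{x})}(a). -/
def ctrbR (σ : QBAG → ℕ → ℝ) (G : QBAG) (a x : ℕ) : ℝ :=
  σ G a - σ (G.restrict (G.args.erase x)) a

/-- Intrinsic-removal contribution: ctrb^{ri}_{G,a}(x) = σ_{G⁻}(a) − σ_{G↓(A∖{x})}(a). -/
def ctrbRI (σ : QBAG → ℕ → ℝ) (G : QBAG) (a x : ℕ) : ℝ :=
  σ (G.dropInto x) a - σ (G.restrict (G.args.erase x)) a

/-- Shapley-based contribution. -/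
def ctrbS (σ : QBAG → ℕ → ℝ) (G : QBAG) (a x : ℕ) : ℝ :=
  ∑ X ∈ ((G.args.erase a).erase x).powerset,
    ((X.card.factorial : ℝ) * ((G.args.erase a).card - X.card - 1).factorial /
      (G.args.erase a).card.factorial) *
    (σ (G.restrict (G.args \ X)) a - σ (G.restrict (G.args \ insert x X)) a)

/-- Gradient-based contribution: the derivative at ε = τ(x) (within [0,1]) of
the map ε ↦ σ_{G[x←ε]}(a). -/
def ctrbG (σ : QBAG → ℕ → ℝ) (G : QBAG) (a x : ℕ) : ℝ :=
  derivWithin (fun ε => σ (G.setTau x ε) a) (Set.Icc (0 : ℝ) 1) (G.tau x)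

/-- The contribution existence principle. -/
def ContributionExistence (ctrb : QBAG → ℕ → ℕ → ℝ) (σ : QBAG → ℕ → ℝ) : Prop :=
  ∀ G : QBAG, G.WF → G.Acyclic → ∀ a ∈ G.args,
    σ G a ≠ G.tau a → ∃ x ∈ G.args, x ≠ a ∧ ctrb G a x ≠ 0

/-- The quantitative contribution existence principle. -/
def QuantContributionExistence (ctrb : QBAG → ℕ → ℕ → ℝ) (σ : QBAG → ℕ → ℝ) : Prop :=
  ∀ G : QBAG, G.WF → G.Acyclic → ∀ a ∈ G.args,
    ∑ x ∈ G.args.erase a, ctrb G a x = σ G a - G.tau a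

/-- The strong faithfulness principle. -/
def StrongFaithfulness (ctrb : QBAG → ℕ → ℕ → ℝ) (σ : QBAG → ℕ → ℝ) : Prop :=
  ∀ G : QBAG, G.WF → G.Acyclic → ∀ a ∈ G.args, ∀ x ∈ G.args,
    ∀ ε ∈ Set.Icc (0 : ℝ) 1,
      (ctrb G a x < 0 →
        (ε < G.tau x → σ G a < σ (G.setTau x ε) a) ∧
        (ε > G.tau x → σ G a > σ (G.setTau x ε) a)) ∧
      (ctrb G a x = 0 → σ G a = σ (G.setTau x ε) a) ∧
      (ctrb G a x > 0 →
        (ε < G.tau x → σ G a > σ (G.setTau x ε) a) ∧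
        (ε > G.tau x → σ G a < σ (G.setTau x ε) a))

/-- The local faithfulness principle. -/
def LocalFaithfulness (ctrb : QBAG → ℕ → ℕ → ℝ) (σ : QBAG → ℕ → ℝ) : Prop :=
  ∀ G : QBAG, G.WF → G.Acyclic → ∀ a ∈ G.args, ∀ x ∈ G.args,
    ∃ δ > 0, ∀ ε ∈ Set.Icc (G.tau x - δ) (G.tau x + δ) ∩ Set.Icc (0 : ℝ) 1,
      (ctrb G a x < 0 →
        (ε < G.tau x → σ G a < σ (G.setTau x ε) a) ∧
        (ε > G.tau x → σ G a > σ (G.setTau x ε) a)) ∧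
      (ctrb G a x > 0 →
        (ε < G.tau x → σ G a > σ (G.setTau x ε) a) ∧
        (ε > G.tau x → σ G a < σ (G.setTau x ε) a))

/-- The quantitative local faithfulness principle: the map ε ↦ σ_{G[x←ε]}(a) is
differentiable (within [0,1]) at τ(x) with derivative ctrb_{G,a}(x); equivalently
σ_{G[x←τ(x)+ε]}(a) = σ_G(a) + ε·ctrb_{G,a}(x) + e(ε) with e(ε)/ε → 0. -/
def QuantLocalFaithfulness (ctrb : QBAG → ℕ → ℕ → ℝ) (σ : QBAG → ℕ → ℝ) : Prop :=
  ∀ G : QBAG, G.WF → G.Acyclic → ∀ a ∈ G.args, ∀ x ∈ G.args,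
    HasDerivWithinAt (fun ε => σ (G.setTau x ε) a) (ctrb G a x)
      (Set.Icc (0 : ℝ) 1) (G.tau x)

/-- The counterfactuality principle. -/
def Counterfactuality (ctrb : QBAG → ℕ → ℕ → ℝ) (σ : QBAG → ℕ → ℝ) : Prop :=
  ∀ G : QBAG, G.WF → G.Acyclic → ∀ a ∈ G.args, ∀ x ∈ G.args,
    (ctrb G a x < 0 → σ G a < σ (G.restrict (G.args.erase x)) a) ∧
    (ctrb G a x = 0 → σ G a = σ (G.restrict (G.args.erase x)) a) ∧
    (ctrb G a x > 0 → σ G a > σ (G.restrict (G.args.erase x)) a)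

/-- The quantitative counterfactuality principle. -/
def QuantCounterfactuality (ctrb : QBAG → ℕ → ℕ → ℝ) (σ : QBAG → ℕ → ℝ) : Prop :=
  ∀ G : QBAG, G.WF → G.Acyclic → ∀ a ∈ G.args, ∀ x ∈ G.args,
    ctrb G a x = σ G a - σ (G.restrict (G.args.erase x)) a

end

/-! The strength of `b` is computed from `τ(b)` and the strengths of the direct attackers and
supporters of `b` alone, so by well-founded induction along the edges of the acyclic graph,
`σ_G(a)` depends only on the part of `G` from which `a` is reachable. If `x` does not reach `a`,
then deleting `x`, deleting the edges into `x`, deleting `x` from a coalition, or changing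
`τ(x)` leaves that part untouched, so every contribution of `x` to `a` vanishes. -/

open Relation

namespace QBAG

@[simp]
lemma mem_attackers {G : QBAG} {y b : ℕ} : y ∈ G.attackers b ↔ (y, b) ∈ G.att := by
  simp [attackers]

@[simp]
lemma mem_supporters {G : QBAG} {y b : ℕ} : y ∈ G.supporters b ↔ (y, b) ∈ G.supp := by
  simp [supporters]

lemma WF.mem_args_of_edge {G : QBAG} (hw : G.WF) {y b : ℕ} (h : G.edge y b) : y ∈ G.args :=
  h.elim (fun h => (hw.1 _ h).1) (fun h => (hw.2.1 _ h).1)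

lemma WF.mem_args_of_reflTransGen {G : QBAG} (hw : G.WF) {a b : ℕ} (ha : a ∈ G.args)
    (h : ReflTransGen G.edge b a) : b ∈ G.args := by
  rcases h.cases_head with rfl | ⟨c, hc, -⟩
  exacts [ha, hw.mem_args_of_edge hc]

open Classical in
noncomputable def ancestors (G : QBAG) (b : ℕ) : Finset ℕ :=
  G.args.filter fun z => TransGen G.edge z b

lemma ancestors_ssubset_of_edge {G : QBAG} (hw : G.WF) (hc : G.Acyclic) {y b : ℕ}
    (h : G.edge y b) : G.ancestors y ⊂ G.ancestors b := by
  refine Finset.ssubset_iff_of_subset (fun z hz => ?_) |>.2 ⟨y, ?_, ?_⟩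
  · simp only [ancestors, Finset.mem_filter] at hz ⊢
    exact ⟨hz.1, hz.2.tail h⟩
  · simpa [ancestors] using ⟨hw.mem_args_of_edge h, TransGen.single h⟩
  · simpa [ancestors] using fun _ => hc y

lemma wellFounded_edge {G : QBAG} (hw : G.WF) (hc : G.Acyclic) : WellFounded G.edge :=
  Subrelation.wf (fun h => Finset.card_lt_card (ancestors_ssubset_of_edge hw hc h))
    (measure fun b => (G.ancestors b).card).wf

lemma Acyclic.mono {G G' : QBAG} (hc : G.Acyclic) (h : ∀ y z, G'.edge y z → G.edge y z) :
    G'.Acyclic :=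
  fun z hz => hc z (hz.lift id h)

lemma edge_of_restrict_edge {G : QBAG} {S : Finset ℕ} {y z : ℕ} (h : (G.restrict S).edge y z) :
    G.edge y z :=
  h.imp (fun h => (Finset.mem_filter.1 h).1) (fun h => (Finset.mem_filter.1 h).1)

lemma edge_of_dropInto_edge {G : QBAG} {x y z : ℕ} (h : (G.dropInto x).edge y z) :
    G.edge y z :=
  h.imp (fun h => (Finset.mem_filter.1 h).1) (fun h => (Finset.mem_filter.1 h).1)

lemma Acyclic.restrict {G : QBAG} (hc : G.Acyclic) (S : Finset ℕ) : (G.restrict S).Acyclic :=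
  hc.mono fun _ _ => edge_of_restrict_edge

lemma Acyclic.dropInto {G : QBAG} (hc : G.Acyclic) (x : ℕ) : (G.dropInto x).Acyclic :=
  hc.mono fun _ _ => edge_of_dropInto_edge

@[simp]
lemma setTau_tau_self (G : QBAG) (x : ℕ) : G.setTau x (G.tau x) = G := by
  simp [setTau]

lemma WF.restrict {G : QBAG} (hw : G.WF) (S : Finset ℕ) : (G.restrict S).WF := by
  refine ⟨fun p hp => ?_, fun p hp => ?_, ?_, fun b hb => hw.2.2.2 b (Finset.mem_inter.1 hb).1⟩
  · obtain ⟨hp, h1, h2⟩ := Finset.mem_filter.1 hp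
    exact ⟨Finset.mem_inter.2 ⟨(hw.1 p hp).1, h1⟩, Finset.mem_inter.2 ⟨(hw.1 p hp).2, h2⟩⟩
  · obtain ⟨hp, h1, h2⟩ := Finset.mem_filter.1 hp
    exact ⟨Finset.mem_inter.2 ⟨(hw.2.1 p hp).1, h1⟩, Finset.mem_inter.2 ⟨(hw.2.1 p hp).2, h2⟩⟩
  · exact hw.2.2.1.mono (Finset.filter_subset _ _) (Finset.filter_subset _ _)

lemma WF.dropInto {G : QBAG} (hw : G.WF) (x : ℕ) : (G.dropInto x).WF :=
  ⟨fun p hp => hw.1 p (Finset.mem_filter.1 hp).1, fun p hp => hw.2.1 p (Finset.mem_filter.1 hp).1,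
    hw.2.2.1.mono (Finset.filter_subset _ _) (Finset.filter_subset _ _), hw.2.2.2⟩

lemma WF.setTau {G : QBAG} (hw : G.WF) (x : ℕ) {ε : ℝ} (hε : ε ∈ Set.Icc (0 : ℝ) 1) :
    (G.setTau x ε).WF := by
  refine ⟨hw.1, hw.2.1, hw.2.2.1, fun b hb => ?_⟩
  rcases eq_or_ne b x with rfl | hbx
  · simpa [QBAG.setTau] using hε
  · simpa [QBAG.setTau, hbx] using hw.2.2.2 b hb

def AgreeAbove (G₁ G₂ : QBAG) (a : ℕ) : Prop :=
  ∀ b, ReflTransGen G₁.edge b a →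
    (b ∈ G₁.args → b ∈ G₂.args) ∧ G₁.tau b = G₂.tau b ∧
      G₁.attackers b = G₂.attackers b ∧ G₁.supporters b = G₂.supporters b

lemma agreeAbove_restrict {G : QBAG} {S : Finset ℕ} {a : ℕ}
    (hS : ∀ b, ReflTransGen G.edge b a → b ∈ S) : G.AgreeAbove (G.restrict S) a := by
  intro b hb
  have hy : ∀ y, G.edge y b → y ∈ S := fun y hy => hS y (hb.head hy)
  refine ⟨fun h => Finset.mem_inter.2 ⟨h, hS b hb⟩, rfl, ?_, ?_⟩ <;> ext y <;>
    simp only [restrict, mem_attackers, mem_supporters, Finset.mem_filter, iff_self_and]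
  exacts [fun h => ⟨hy y (.inl h), hS b hb⟩, fun h => ⟨hy y (.inr h), hS b hb⟩]

lemma restrict_agreeAbove_restrict {G : QBAG} {S T : Finset ℕ} {a : ℕ}
    (hST : ∀ b, ReflTransGen G.edge b a → (b ∈ S ↔ b ∈ T)) :
    (G.restrict S).AgreeAbove (G.restrict T) a := by
  intro b hb
  have hb' : ReflTransGen G.edge b a := hb.lift id fun _ _ => edge_of_restrict_edge
  have hy : ∀ y, G.edge y b → (y ∈ S ↔ y ∈ T) := fun y hy => hST y (hb'.head hy)
  refine ⟨fun h => ?_, rfl, ?_, ?_⟩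
  · simp only [restrict, Finset.mem_inter] at h ⊢
    exact ⟨h.1, (hST b hb').1 h.2⟩
  all_goals
    ext y
    simp only [restrict, mem_attackers, mem_supporters, Finset.mem_filter, and_congr_right_iff]
  · exact fun h => by rw [hy y (.inl h), hST b hb']
  · exact fun h => by rw [hy y (.inr h), hST b hb']

lemma agreeAbove_dropInto {G : QBAG} {a x : ℕ} (hxa : ¬ ReflTransGen G.edge x a) :
    G.AgreeAbove (G.dropInto x) a := by
  intro b hb
  have hbx : b ≠ x := by rintro rfl; exact hxa hb
  refine ⟨id, rfl, ?_, ?_⟩ <;> ext y <;>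
    simp [dropInto, hbx]

lemma agreeAbove_setTau {G : QBAG} {a x : ℕ} (hxa : ¬ ReflTransGen G.edge x a) (ε : ℝ) :
    G.AgreeAbove (G.setTau x ε) a := by
  intro b hb
  have hbx : b ≠ x := by rintro rfl; exact hxa hb
  exact ⟨id, (Function.update_of_ne hbx _ _).symm, rfl, rfl⟩

end QBAG

def LocalAggregation (agg : QBAG → (ℕ → ℝ) → ℕ → ℝ) : Prop :=
  ∀ (G G' : QBAG) (s s' : ℕ → ℝ) (b : ℕ),
    G.attackers b = G'.attackers b → G.supporters b = G'.supporters b →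
    (∀ y ∈ G.attackers b, s y = s' y) → (∀ y ∈ G.supporters b, s y = s' y) →
    agg G s b = agg G' s' b

lemma localAggregation_sumAgg : LocalAggregation sumAgg := by
  intro G G' s s' b hA hS h1 h2
  rw [sumAgg, sumAgg, ← hA, ← hS, Finset.sum_congr rfl h1, Finset.sum_congr rfl h2]

lemma localAggregation_prodAgg : LocalAggregation prodAgg := by
  intro G G' s s' b hA hS h1 h2
  rw [prodAgg, prodAgg, ← hA, ← hS]
  congr 1 <;> refine Finset.prod_congr rfl fun y hy => ?_
  exacts [by rw [h1 y hy], by rw [h2 y hy]]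

lemma localAggregation_topAgg : LocalAggregation topAgg := by
  intro G G' s s' b hA hS h1 h2
  rw [topAgg, topAgg, ← hA, ← hS, Finset.fold_congr h1, Finset.fold_congr h2]

namespace IsSemantics

variable {agg : QBAG → (ℕ → ℝ) → ℕ → ℝ} {iota : ℝ → ℝ → ℝ} {σ : QBAG → ℕ → ℝ}

theorem apply_eq_of_agreeAbove (hσ : IsSemantics agg iota σ) (hagg : LocalAggregation agg)
    {G₁ G₂ : QBAG} (hw₁ : G₁.WF) (hc₁ : G₁.Acyclic) (hw₂ : G₂.WF) (hc₂ : G₂.Acyclic)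
    {a : ℕ} (ha : a ∈ G₁.args) (h : G₁.AgreeAbove G₂ a) : σ G₁ a = σ G₂ a := by
  suffices ∀ b, ReflTransGen G₁.edge b a → σ G₁ b = σ G₂ b from this a .refl
  intro b
  induction b using (QBAG.wellFounded_edge hw₁ hc₁).induction with
  | _ b ih =>
    intro hb
    have hb₁ := hw₁.mem_args_of_reflTransGen ha hb
    obtain ⟨hb₂, htau, hatt, hsupp⟩ := h b hb
    have hpred : ∀ y, G₁.edge y b → σ G₁ y = σ G₂ y := fun y hy => ih y hy (hb.head hy)
    rw [hσ G₁ hw₁ hc₁ b hb₁, hσ G₂ hw₂ hc₂ b (hb₂ hb₁), htau,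
      hagg G₁ G₂ _ _ b hatt hsupp (fun y hy => hpred y (.inl (QBAG.mem_attackers.1 hy)))
        (fun y hy => hpred y (.inr (QBAG.mem_supporters.1 hy)))]

end IsSemantics

section Directionality

variable {agg : QBAG → (ℕ → ℝ) → ℕ → ℝ} {iota : ℝ → ℝ → ℝ} {σ : QBAG → ℕ → ℝ}
  {G : QBAG} {a x : ℕ}

theorem ctrbR_eq_zero_of_not_reflTransGen (hσ : IsSemantics agg iota σ)
    (hagg : LocalAggregation agg) (hw : G.WF) (hc : G.Acyclic) (ha : a ∈ G.args)
    (hxa : ¬ ReflTransGen G.edge x a) :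
    ctrbR σ G a x = 0 := by
  have hS : ∀ b, ReflTransGen G.edge b a → b ∈ G.args.erase x := fun b hb =>
    Finset.mem_erase.2 ⟨by rintro rfl; exact hxa hb, hw.mem_args_of_reflTransGen ha hb⟩
  rw [ctrbR, hσ.apply_eq_of_agreeAbove hagg hw hc (hw.restrict _) (hc.restrict _) ha
    (QBAG.agreeAbove_restrict hS), sub_self]

theorem ctrbRI_eq_zero_of_not_reflTransGen (hσ : IsSemantics agg iota σ)
    (hagg : LocalAggregation agg) (hw : G.WF) (hc : G.Acyclic) (ha : a ∈ G.args)
    (hxa : ¬ ReflTransGen G.edge x a) :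
    ctrbRI σ G a x = 0 := by
  rw [ctrbRI, ← hσ.apply_eq_of_agreeAbove hagg hw hc (hw.dropInto x) (hc.dropInto x) ha
    (QBAG.agreeAbove_dropInto hxa)]
  exact ctrbR_eq_zero_of_not_reflTransGen hσ hagg hw hc ha hxa

theorem ctrbS_eq_zero_of_not_reflTransGen (hσ : IsSemantics agg iota σ)
    (hagg : LocalAggregation agg) (hw : G.WF) (hc : G.Acyclic) (ha : a ∈ G.args)
    (hxa : ¬ ReflTransGen G.edge x a) :
    ctrbS σ G a x = 0 := by
  refine Finset.sum_eq_zero fun X hX => ?_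
  have haX : a ∉ X := fun h => by simpa using Finset.mem_powerset.1 hX h
  have hST : ∀ b, ReflTransGen G.edge b a → (b ∈ G.args \ X ↔ b ∈ G.args \ insert x X) :=
    fun b hb => by simp [show b ≠ x by rintro rfl; exact hxa hb]
  rw [hσ.apply_eq_of_agreeAbove hagg (hw.restrict _) (hc.restrict _) (hw.restrict _)
    (hc.restrict _) (by simpa [QBAG.restrict] using ⟨ha, haX⟩)
    (QBAG.restrict_agreeAbove_restrict hST), sub_self, mul_zero]

theorem ctrbG_eq_zero_of_not_reflTransGen (hσ : IsSemantics agg iota σ)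
    (hagg : LocalAggregation agg) (hw : G.WF) (hc : G.Acyclic) (ha : a ∈ G.args)
    (hxa : ¬ ReflTransGen G.edge x a) :
    ctrbG σ G a x = 0 := by
  have hconst : Set.EqOn (fun ε => σ (G.setTau x ε) a) (fun _ => σ G a) (Set.Icc 0 1) :=
    fun ε hε => (hσ.apply_eq_of_agreeAbove hagg hw hc (hw.setTau x hε) hc ha
      (QBAG.agreeAbove_setTau hxa ε)).symm
  rw [ctrbG, derivWithin_congr hconst (by simp), derivWithin_fun_const, Pi.zero_apply]

end Directionality

/-- Each of ctrb^r, ctrb^{ri}, ctrb^s, and ctrb^g satisfies the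
directionality principle w.r.t. each of the QE, DFQuAD, SD-DFQuAD, EB, and EBT
semantics: if there is no directed path from x to a in (A, Att ∪ Supp), then the
contribution of x to a is 0. -/
theorem all_contribution_functions_satisfy_directionality
    (σ : QBAG → ℕ → ℝ) (hσ : IsQE σ ∨ IsDF σ ∨ IsSD σ ∨ IsEB σ ∨ IsEBT σ) :
    ∀ G : QBAG, G.WF → G.Acyclic → ∀ a ∈ G.args, ∀ x ∈ G.args,
      ¬ Relation.ReflTransGen G.edge x a →
      ctrbR σ G a x = 0 ∧ ctrbRI σ G a x = 0 ∧ ctrbS σ G a x = 0 ∧ ctrbG σ G a x = 0 := by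
  intro G hw hc a ha x _ hxa
  obtain ⟨agg, iota, hσ, hagg⟩ : ∃ agg iota, IsSemantics agg iota σ ∧ LocalAggregation agg := by
    rcases hσ with h | h | h | h | h
    exacts [⟨_, _, h, localAggregation_sumAgg⟩, ⟨_, _, h, localAggregation_prodAgg⟩,
      ⟨_, _, h, localAggregation_prodAgg⟩, ⟨_, _, h, localAggregation_sumAgg⟩,
      ⟨_, _, h, localAggregation_topAgg⟩]
  exact ⟨ctrbR_eq_zero_of_not_reflTransGen hσ hagg hw hc ha hxa,
    ctrbRI_eq_zero_of_not_reflTransGen hσ hagg hw hc ha hxa,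
    ctrbS_eq_zero_of_not_reflTransGen hσ hagg hw hc ha hxa,
    ctrbG_eq_zero_of_not_reflTransGen hσ hagg hw hc ha hxa⟩
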